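/- arXiv:2207.12223 — 2 statements merged into one kernel-verified Lean document; each statement's English description precedes it below -/
import Mathlib

section
/- Let a : ℝ^d → ℝ be a jump kernel (symmetric, strictly positive, bounded, continuous, integrable with ∫ a = 1) satisfying assumption (A): â(k) = 1 − A|k|^α + o(|k|^α) as k → 0 for some A > 0 and 0 < α ≤ 2, and assume d > α. Then 1 − â(k) > 0 for every k ≠ 0 and the function k ↦ â(k)/(1 − â(k)) is integrable on every compact subset of ℝ^d. -/
/-!
View `â(k)` as the characteristic function at `-k` of the probability measure `a(y) dy`.
Evenness of `a` makes `â` real, and since `a > 0` charges every open set,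
`1 - Re â(k) = ∫ (1 - cos ⟪y, k⟫) a(y) dy > 0` for `k ≠ 0`. So `â / (1 - â)` is continuous
away from `0`, while near `0` assumption (A) gives `|1 - â(k)| ≥ (A/2) |k|^α`; hence the quotient
is `O(|k|^(-α))`, which is locally integrable because `α < d`.
-/

open MeasureTheory Asymptotics Filter Topology Metric

section LocalIntegrability

variable {E F : Type*} [NormedAddCommGroup E] [NormedSpace ℝ E] [FiniteDimensional ℝ E]
  [MeasurableSpace E] [BorelSpace E] [NormedAddCommGroup F] {μ : Measure E} [μ.IsAddHaarMeasure]

theorem locallyIntegrable_of_continuousOn_compl_zero_of_norm_le_rpow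
    (hdim : 1 ≤ Module.finrank ℝ E) {f : E → F} {C α : ℝ} (hα : α < Module.finrank ℝ E)
    (hf : ContinuousOn f {0}ᶜ) (h_decay : ∀ᶠ x in 𝓝[≠] 0, ‖f x‖ ≤ C * ‖x‖ ^ (-α)) :
    LocallyIntegrable f μ := by
  have : Nontrivial E := Module.nontrivial_of_finrank_pos (R := ℝ) hdim
  have h_meas : AEStronglyMeasurable f μ := by
    rw [← restrict_compl_singleton (μ := μ) 0]
    exact hf.aestronglyMeasurable (measurableSet_singleton 0).compl
  obtain ⟨r, hr, h_ball⟩ := eventually_nhdsWithin_iff.1 h_decay |> Metric.eventually_nhds_iff.1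
  have h_int_ball : IntegrableOn f (ball 0 r) μ := by
    refine integrableOn_ball_of_norm_le_rpow (C := C) hdim hα ?_ h_meas
    filter_upwards [ae_restrict_mem measurableSet_ball, ae_restrict_of_ae (μ.ae_ne 0)]
      with x hx hx0 using h_ball hx hx0
  refine locallyIntegrable_iff.2 fun K hK => ?_
  have h_int_away : IntegrableOn f (K \ ball 0 r) μ :=
    (hf.mono fun x hx hx0 => hx.2 (by simp [Set.mem_singleton_iff.1 hx0, hr])).integrableOn_compact
      (hK.diff isOpen_ball)
  exact (h_int_away.union h_int_ball).mono_set (Set.sdiff_union_self.symm ▸ Set.subset_union_left)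

end LocalIntegrability

section SymbolNearZero

variable {E : Type*} [NormedAddCommGroup E] {φ : E → ℂ} {A α : ℝ}

lemma eventually_mul_rpow_le_norm_one_sub (hA : 0 < A)
    (h : (fun k => φ k - ((1 - A * ‖k‖ ^ α : ℝ) : ℂ)) =o[𝓝 0] fun k => ‖k‖ ^ α) :
    ∀ᶠ k in 𝓝 0, A / 2 * ‖k‖ ^ α ≤ ‖1 - φ k‖ := by
  filter_upwards [h.def (half_pos hA)] with k hk
  have h_rpow : 0 ≤ ‖k‖ ^ α := by positivity
  rw [Real.norm_of_nonneg h_rpow] at hk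
  calc A / 2 * ‖k‖ ^ α = ‖((A * ‖k‖ ^ α : ℝ) : ℂ)‖ - A / 2 * ‖k‖ ^ α := by
        rw [Complex.norm_real, Real.norm_of_nonneg (by positivity)]; ring
    _ ≤ ‖((A * ‖k‖ ^ α : ℝ) : ℂ)‖ - ‖φ k - ((1 - A * ‖k‖ ^ α : ℝ) : ℂ)‖ := by gcongr
    _ ≤ ‖((A * ‖k‖ ^ α : ℝ) : ℂ) - (φ k - ((1 - A * ‖k‖ ^ α : ℝ) : ℂ))‖ := norm_sub_norm_le _ _
    _ = ‖1 - φ k‖ := by congr 1; push_cast; ring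

lemma eventually_norm_div_one_sub_le_rpow (hφ : ∀ k, ‖φ k‖ ≤ 1) (hA : 0 < A)
    (h : (fun k => φ k - ((1 - A * ‖k‖ ^ α : ℝ) : ℂ)) =o[𝓝 0] fun k => ‖k‖ ^ α) :
    ∀ᶠ k in 𝓝[≠] 0, ‖φ k / (1 - φ k)‖ ≤ 2 / A * ‖k‖ ^ (-α) := by
  filter_upwards [nhdsWithin_le_nhds (eventually_mul_rpow_le_norm_one_sub hA h),
    self_mem_nhdsWithin] with k hk hk0
  have h_rpow : 0 < ‖k‖ ^ α := Real.rpow_pos_of_pos (norm_pos_iff.2 hk0) α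
  calc ‖φ k / (1 - φ k)‖ ≤ 1 / (A / 2 * ‖k‖ ^ α) := by
        rw [norm_div]; exact div_le_div₀ zero_le_one (hφ k) (by positivity) hk
    _ = 2 / A * ‖k‖ ^ (-α) := by rw [Real.rpow_neg (norm_nonneg k)]; field_simp

end SymbolNearZero

section Density

variable {X : Type*} [MeasurableSpace X] {μ : Measure X}

lemma isProbabilityMeasure_withDensity_ofReal {a : X → ℝ} (ha : 0 ≤ᵐ[μ] a)
    (ha_int : Integrable a μ) (ha_one : ∫ x, a x ∂μ = 1) :
    IsProbabilityMeasure (μ.withDensity fun x => ENNReal.ofReal (a x)) :=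
  ⟨by rw [withDensity_apply _ MeasurableSet.univ, Measure.restrict_univ,
    ← ofReal_integral_eq_lintegral_ofReal ha_int ha, ha_one, ENNReal.ofReal_one]⟩

lemma isOpenPosMeasure_withDensity [TopologicalSpace X] [μ.IsOpenPosMeasure] {f : X → ENNReal}
    (hf : AEMeasurable f μ) (hf_pos : ∀ x, f x ≠ 0) : (μ.withDensity f).IsOpenPosMeasure := by
  refine ⟨fun U hU hU_ne hU_zero => hU.measure_ne_zero μ hU_ne ?_⟩
  have h_ae : f =ᵐ[μ.restrict U] 0 :=
    (lintegral_eq_zero_iff' hf.restrict).1 (le_zero_iff.1 (hU_zero ▸ withDensity_apply_le f U))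
  rw [← Measure.restrict_eq_zero, ← ae_eq_bot, ← eventually_false_iff_eq_bot]
  exact h_ae.mono fun x hx => hf_pos x hx

end Density

section CharFun

open Complex
open scoped RealInnerProductSpace

variable {E : Type*} [NormedAddCommGroup E] [InnerProductSpace ℝ E] [MeasurableSpace E]
  {μ : Measure E}

lemma integral_exp_neg_inner_mul_eq_charFun {a : E → ℝ} (ha : 0 ≤ a) (ha_meas : AEMeasurable a μ)
    (k : E) :
    ∫ y, exp (-(I * ⟪k, y⟫)) * a y ∂μ
      = charFun (μ.withDensity fun y => ENNReal.ofReal (a y)) (-k) := by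
  rw [charFun_apply, integral_withDensity_eq_integral_toReal_smul₀ ha_meas.ennreal_ofReal
    (ae_of_all _ fun _ => ENNReal.ofReal_lt_top)]
  congr with y
  rw [ENNReal.toReal_ofReal (ha y), inner_neg_right, real_inner_comm, Complex.real_smul,
    ofReal_neg, mul_comm, neg_mul, mul_comm I]

variable [BorelSpace E]

lemma integral_exp_neg_inner_neg_mul_of_even [μ.IsNegInvariant] {a : E → ℝ}
    (ha : a.Even) (k : E) :
    ∫ y, exp (-(I * ⟪-k, y⟫)) * a y ∂μ = ∫ y, exp (-(I * ⟪k, y⟫)) * a y ∂μ := by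
  rw [← integral_neg_eq_self]
  simp only [inner_neg_left, inner_neg_right, neg_neg, ha.eq]

lemma im_integral_exp_neg_inner_mul_eq_zero_of_even [μ.IsNegInvariant] {a : E → ℝ}
    (ha : a.Even) (k : E) : (∫ y, exp (-(I * ⟪k, y⟫)) * a y ∂μ).im = 0 := by
  rw [← conj_eq_iff_im, ← integral_conj, ← integral_exp_neg_inner_neg_mul_of_even ha k]
  congr with y
  simp [← exp_conj, inner_neg_left]

lemma one_sub_re_charFun_pos [IsProbabilityMeasure μ] [μ.IsOpenPosMeasure] {t : E} (ht : t ≠ 0) :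
    0 < 1 - (charFun μ t).re := by
  have h_exp : Integrable (fun x => exp (⟪x, t⟫ * I)) μ :=
    (BoundedContinuousFunction.innerProbChar t).integrable μ
  have h_cos : Integrable (fun x => Real.cos ⟪x, t⟫) μ := by simpa using h_exp.re
  have h_re : (charFun μ t).re = ∫ x, Real.cos ⟪x, t⟫ ∂μ := by
    rw [charFun_apply, ← RCLike.re_to_complex, ← integral_re h_exp]
    simp
  have h_sub : 1 - ∫ x, Real.cos ⟪x, t⟫ ∂μ = ∫ x, (1 - Real.cos ⟪x, t⟫) ∂μ := by
    rw [integral_sub (integrable_const 1) h_cos]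
    simp
  rw [h_re, h_sub]
  have h_pi : ⟪(Real.pi / ‖t‖ ^ 2) • t, t⟫ = Real.pi := by
    rw [real_inner_smul_left, real_inner_self_eq_norm_sq]
    field_simp [norm_ne_zero_iff.2 ht]
  refine integral_pos_of_integrable_nonneg_nonzero (x := (Real.pi / ‖t‖ ^ 2) • t) (by fun_prop)
    ((integrable_const 1).sub h_cos) (fun x => sub_nonneg.2 (Real.cos_le_one _)) ?_
  rw [h_pi, Real.cos_pi]
  norm_num

end CharFun

theorem green_symbol_locally_integrable_general
    (d : ℕ) (a : EuclideanSpace ℝ (Fin d) → ℝ)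
    (hsymm : ∀ x, a (-x) = a x)
    (hpos : ∀ x, 0 < a x)
    (hint : Integrable a)
    (hnorm : ∫ x, a x = 1)
    (hatA : EuclideanSpace ℝ (Fin d) → ℂ)
    (hhatA : ∀ k, hatA k = ∫ y, Complex.exp (-(Complex.I * ((inner ℝ k y : ℝ) : ℂ))) * (a y : ℂ))
    (A α : ℝ) (hA : 0 < A) (hα : 0 < α)
    (hAssumptionA :
      (fun k : EuclideanSpace ℝ (Fin d) => hatA k - ((1 - A * ‖k‖ ^ α : ℝ) : ℂ))
        =o[nhds 0] fun k => ‖k‖ ^ α)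
    (hdα : α < d) :
    (∀ k, k ≠ 0 → (hatA k).im = 0 ∧ 0 < 1 - (hatA k).re) ∧
    (∀ K : Set (EuclideanSpace ℝ (Fin d)), IsCompact K →
      IntegrableOn (fun k => hatA k / (1 - hatA k)) K) := by
  set ν := volume.withDensity fun y => ENNReal.ofReal (a y)
  have : IsProbabilityMeasure ν :=
    isProbabilityMeasure_withDensity_ofReal (ae_of_all _ fun x => (hpos x).le) hint hnorm
  have : ν.IsOpenPosMeasure := isOpenPosMeasure_withDensity hint.aemeasurable.ennreal_ofReal
    fun x => (ENNReal.ofReal_pos.2 (hpos x)).ne'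
  have h_charFun (k) : hatA k = charFun ν (-k) :=
    (hhatA k).trans (integral_exp_neg_inner_mul_eq_charFun (fun x => (hpos x).le)
      hint.aemeasurable k)
  have h_real (k) : (hatA k).im = 0 :=
    hhatA k ▸ im_integral_exp_neg_inner_mul_eq_zero_of_even hsymm k
  have h_pos (k) (hk : k ≠ 0) : 0 < 1 - (hatA k).re :=
    h_charFun k ▸ one_sub_re_charFun_pos (neg_ne_zero.2 hk)
  have h_cont : Continuous hatA := funext h_charFun ▸ continuous_charFun.comp continuous_neg
  have h_le_one (k) : ‖hatA k‖ ≤ 1 := h_charFun k ▸ norm_charFun_le_one _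
  have h_ne (k) (hk : k ≠ 0) : 1 - hatA k ≠ 0 :=
    sub_ne_zero.2 fun h => (h_pos k hk).ne' (by simp [← h])
  have hdim : 1 ≤ Module.finrank ℝ (EuclideanSpace ℝ (Fin d)) := by
    rw [finrank_euclideanSpace_fin]
    exact_mod_cast (hα.trans hdα)
  refine ⟨fun k hk => ⟨h_real k, h_pos k hk⟩, fun K hK => ?_⟩
  refine (locallyIntegrable_of_continuousOn_compl_zero_of_norm_le_rpow hdim
    (by rwa [finrank_euclideanSpace_fin]) ?_
    (eventually_norm_div_one_sub_le_rpow h_le_one hA hAssumptionA)).integrableOn_isCompact hK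
  exact h_cont.continuousOn.div (continuous_const.sub h_cont).continuousOn h_ne

/-- For a jump kernel `a` satisfying assumption (A):
`â(k) = 1 - A|k|^α + o(|k|^α)` as `k → 0`, with `0 < α ≤ 2` and `d > α`, one has
`1 - â(k) > 0` for all `k ≠ 0` and `k ↦ â(k)/(1 - â(k))` is integrable on every
compact subset of `ℝ^d`. -/
theorem green_symbol_locally_integrable
    (d : ℕ) (a : EuclideanSpace ℝ (Fin d) → ℝ)
    (hsymm : ∀ x, a (-x) = a x)
    (hpos : ∀ x, 0 < a x)
    (hbdd : ∃ M, ∀ x, a x ≤ M)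
    (hcont : Continuous a)
    (hint : Integrable a)
    (hnorm : ∫ x, a x = 1)
    (hatA : EuclideanSpace ℝ (Fin d) → ℂ)
    (hhatA : ∀ k, hatA k = ∫ y, Complex.exp (-(Complex.I * ((inner ℝ k y : ℝ) : ℂ))) * (a y : ℂ))
    (A α : ℝ) (hA : 0 < A) (hα : 0 < α) (hα2 : α ≤ 2)
    (hAssumptionA :
      (fun k : EuclideanSpace ℝ (Fin d) => hatA k - ((1 - A * ‖k‖ ^ α : ℝ) : ℂ))
        =o[nhds 0] fun k => ‖k‖ ^ α)
    (hdα : α < d) :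
    (∀ k, k ≠ 0 → (hatA k).im = 0 ∧ 0 < 1 - (hatA k).re) ∧
    (∀ K : Set (EuclideanSpace ℝ (Fin d)), IsCompact K →
      IntegrableOn (fun k => hatA k / (1 - hatA k)) K) :=
  green_symbol_locally_integrable_general d a hsymm hpos hint hnorm hatA hhatA A α hA hα
    hAssumptionA hdα
end

section
/- Let N : [0, ∞) → (0, ∞) with N(T) → ∞ as T → ∞, let ρ : [0, ∞) × [0, ∞) → [0, ∞), (t, τ) ↦ ρ_t(τ), be measurable with a constant C such that (1/N(T)) ∫_0^T ρ_t(τ) dt ≤ C for all T > 0, τ ≥ 0, and (1/N(T)) ∫_0^T ρ_t(τ) dt → 1 as T → ∞ for each fixed τ. Let (μ_τ)_{τ ≥ 0} be a measurable family of (Borel) measures on ℝ^d and define ν_t(B) := ∫_0^∞ μ_τ(B) ρ_t(τ) dτ for Borel sets B. Then for every Borel set B with ∫_0^∞ μ_τ(B) dτ < ∞, the renormalized limit lim_{T→∞} (1/N(T)) ∫_0^T ν_t(B) dt exists and equals ∫_0^∞ μ_τ(B) dτ. -/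
open MeasureTheory Set Filter

/-- Renormalized Green measure of a time-changed process: if
`(1/N(T))∫_0^T ρ_t(τ) dt` is uniformly bounded and tends to `1` for each `τ ≥ 0`, and
`ν_t(B) = ∫_0^∞ μ_τ(B) ρ_t(τ) dτ`, then for every Borel set `B` with
`∫_0^∞ μ_τ(B) dτ < ∞` the renormalized limit `lim_{T→∞} (1/N(T)) ∫_0^T ν_t(B) dt`
exists and equals `∫_0^∞ μ_τ(B) dτ`. -/
theorem renormalized_green_measure_of_time_change
    (d : ℕ)
    (N : ℝ → ℝ)
    (hN_pos : ∀ T ≥ (0 : ℝ), 0 < N T)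
    (hN_infty : Tendsto N atTop atTop)
    (ρ : ℝ → ℝ → ℝ)
    (hρ_meas : Measurable (Function.uncurry ρ))
    (hρ_nonneg : ∀ t τ, 0 ≤ ρ t τ)
    (C : ℝ)
    (hM_bdd : ∀ T > (0 : ℝ), ∀ τ ≥ (0 : ℝ),
      (1 / N T) * ∫ t in Ioc (0 : ℝ) T, ρ t τ ≤ C)
    (hM_lim : ∀ τ ≥ (0 : ℝ),
      Tendsto (fun T => (1 / N T) * ∫ t in Ioc (0 : ℝ) T, ρ t τ) atTop (nhds 1))
    (μ : ℝ → Measure (EuclideanSpace ℝ (Fin d)))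
    (hμ_meas : ∀ B : Set (EuclideanSpace ℝ (Fin d)), MeasurableSet B →
      Measurable fun τ => μ τ B)
    (B : Set (EuclideanSpace ℝ (Fin d))) (hB : MeasurableSet B)
    (hBfin : (∫⁻ τ in Ioi (0 : ℝ), μ τ B) < ⊤) :
    Tendsto
      (fun T => (1 / N T) *
        (∫⁻ t in Ioc (0 : ℝ) T,
          ∫⁻ τ in Ioi (0 : ℝ), μ τ B * ENNReal.ofReal (ρ t τ)).toReal)
      atTop (nhds (∫⁻ τ in Ioi (0 : ℝ), μ τ B).toReal) := by
  set L : ENNReal := ∫⁻ τ in Ioi (0 : ℝ), μ τ B with hLdef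
  have hL : L ≠ ⊤ := hBfin.ne
  -- measurability of sections of ρ
  have hρτ : ∀ τ : ℝ, Measurable fun t => ρ t τ := fun τ =>
    hρ_meas.comp (measurable_id.prodMk measurable_const)
  -- ρ(·,τ) is integrable on Ioc 0 T for τ ≥ 0
  have hInt : ∀ τ ≥ (0 : ℝ), ∀ T : ℝ, IntegrableOn (fun t => ρ t τ) (Ioc 0 T) := by
    intro τ hτ T
    by_contra hni
    have hT : 0 < T := by
      by_contra hT
      push_neg at hT
      refine hni ?_
      rw [IntegrableOn, Ioc_eq_empty (not_lt.mpr hT)]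
      simp
    have h0 : ∀ T' ≥ T, (1 / N T') * ∫ t in Ioc (0 : ℝ) T', ρ t τ = 0 := by
      intro T' hT'
      have : ¬ IntegrableOn (fun t => ρ t τ) (Ioc 0 T') := fun h =>
        hni (h.mono_set (Ioc_subset_Ioc le_rfl hT'))
      rw [integral_undef this, mul_zero]
    have h2 : Tendsto (fun T => (1 / N T) * ∫ t in Ioc (0 : ℝ) T, ρ t τ) atTop (nhds 0) :=
      Tendsto.congr' (by filter_upwards [eventually_ge_atTop T] with T' hT' using (h0 T' hT').symm)
        tendsto_const_nhds
    exact one_ne_zero (tendsto_nhds_unique (hM_lim τ hτ) h2)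
  -- the lintegral of ofReal ρ equals ofReal of the integral
  have hg_eq : ∀ τ ≥ (0 : ℝ), ∀ T : ℝ,
      (∫⁻ t in Ioc (0 : ℝ) T, ENNReal.ofReal (ρ t τ))
        = ENNReal.ofReal (∫ t in Ioc (0 : ℝ) T, ρ t τ) := by
    intro τ hτ T
    exact (ofReal_integral_eq_lintegral_ofReal (hInt τ hτ T)
      (Filter.Eventually.of_forall fun t => hρ_nonneg t τ)).symm
  -- product measurability
  have hprod : Measurable (fun p : ℝ × ℝ => μ p.2 B * ENNReal.ofReal (ρ p.1 p.2)) :=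
    ((hμ_meas B hB).comp measurable_snd).mul (ENNReal.measurable_ofReal.comp hρ_meas)
  -- Tonelli swap
  have hswap : ∀ T : ℝ,
      (∫⁻ t in Ioc (0 : ℝ) T, ∫⁻ τ in Ioi (0 : ℝ), μ τ B * ENNReal.ofReal (ρ t τ))
        = ∫⁻ τ in Ioi (0 : ℝ), μ τ B * ∫⁻ t in Ioc (0 : ℝ) T, ENNReal.ofReal (ρ t τ) := by
    intro T
    rw [lintegral_lintegral_swap (hprod.aemeasurable)]
    refine lintegral_congr fun τ => ?_
    exact lintegral_const_mul _ ((ENNReal.measurable_ofReal.comp (hρτ τ)))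
  -- measurability of the inner lintegral
  have hGmeas : ∀ T : ℝ, Measurable fun τ =>
      ∫⁻ t in Ioc (0 : ℝ) T, ENNReal.ofReal (ρ t τ) := by
    intro T
    exact Measurable.lintegral_prod_left (f := fun t τ => ENNReal.ofReal (ρ t τ))
      (by exact ENNReal.measurable_ofReal.comp hρ_meas)
  -- the key ENNReal-valued family
  set K : ℝ → ENNReal := fun T => ENNReal.ofReal (1 / N T) *
      ∫⁻ t in Ioc (0 : ℝ) T, ∫⁻ τ in Ioi (0 : ℝ), μ τ B * ENNReal.ofReal (ρ t τ) with hKdef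
  have hK_eq : ∀ T : ℝ, K T = ∫⁻ τ in Ioi (0 : ℝ),
      ENNReal.ofReal (1 / N T) * (μ τ B * ∫⁻ t in Ioc (0 : ℝ) T, ENNReal.ofReal (ρ t τ)) := by
    intro T
    show ENNReal.ofReal (1 / N T) *
        (∫⁻ t in Ioc (0 : ℝ) T, ∫⁻ τ in Ioi (0 : ℝ), μ τ B * ENNReal.ofReal (ρ t τ)) = _
    rw [hswap T]
    exact (lintegral_const_mul _ ((hμ_meas B hB).mul (hGmeas T))).symm
  -- dominated convergence
  have hKlim : Tendsto K atTop (nhds L) := by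
    have := tendsto_lintegral_filter_of_dominated_convergence
      (μ := volume.restrict (Ioi (0:ℝ))) (l := atTop)
      (F := fun T τ => ENNReal.ofReal (1 / N T) *
        (μ τ B * ∫⁻ t in Ioc (0 : ℝ) T, ENNReal.ofReal (ρ t τ)))
      (f := fun τ => μ τ B)
      (fun τ => μ τ B * ENNReal.ofReal C)
      (Filter.Eventually.of_forall fun T =>
        measurable_const.mul ((hμ_meas B hB).mul (hGmeas T)))
      ?_ ?_ ?_
    · exact Tendsto.congr (fun T => (hK_eq T).symm) this
    · -- bound
      filter_upwards [eventually_gt_atTop (0:ℝ)] with T hT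
      filter_upwards [ae_restrict_mem measurableSet_Ioi] with τ hτ
      have hτ0 : (0:ℝ) ≤ τ := le_of_lt hτ
      rw [hg_eq τ hτ0 T, mul_comm (ENNReal.ofReal (1 / N T)), mul_assoc,
        ← ENNReal.ofReal_mul (integral_nonneg fun t => hρ_nonneg t τ)]
      refine mul_le_mul_right (ENNReal.ofReal_le_ofReal ?_) _
      rw [mul_comm]
      exact hM_bdd T hT τ hτ0
    · -- finiteness of the bound
      rw [lintegral_mul_const _ (hμ_meas B hB)]
      exact ENNReal.mul_ne_top hL ENNReal.ofReal_ne_top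
    · -- pointwise limit
      filter_upwards [ae_restrict_mem measurableSet_Ioi] with τ hτ
      have hτ0 : (0:ℝ) ≤ τ := le_of_lt hτ
      have h1 : Tendsto (fun T => ENNReal.ofReal
          ((1 / N T) * ∫ t in Ioc (0 : ℝ) T, ρ t τ)) atTop (nhds (ENNReal.ofReal 1)) :=
        (ENNReal.continuous_ofReal.tendsto 1).comp (hM_lim τ hτ0)
      have h2 : Tendsto (fun T => μ τ B * ENNReal.ofReal
          ((1 / N T) * ∫ t in Ioc (0 : ℝ) T, ρ t τ)) atTop (nhds (μ τ B)) := by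
        have := ENNReal.Tendsto.const_mul (a := μ τ B) h1 (Or.inl (by simp))
        simpa using this
      refine Tendsto.congr' ?_ h2
      filter_upwards [eventually_ge_atTop (0:ℝ)] with T hT
      have hN : (0:ℝ) ≤ 1 / N T := (one_div_nonneg.mpr (hN_pos T hT).le)
      rw [hg_eq τ hτ0 T, ENNReal.ofReal_mul hN, mul_left_comm]
  -- conclude by applying toReal
  have hmain : Tendsto (fun T => (K T).toReal) atTop (nhds L.toReal) :=
    (ENNReal.tendsto_toReal hL).comp hKlim
  refine Tendsto.congr' ?_ hmain
  filter_upwards [eventually_ge_atTop (0:ℝ)] with T hT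
  show (ENNReal.ofReal (1 / N T) * _).toReal = 1 / N T * _
  rw [ENNReal.toReal_mul, ENNReal.toReal_ofReal (one_div_nonneg.mpr (hN_pos T hT).le)]
end
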